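/- Let λ, μ ∈ 𝒫^l_n, let 0 ≤ j ≤ n and let s, t ∈ Std(μ). If s is λ-row-dominated on 1,…,j and s ⊴ t (that is, w_s ≤ w_t in the Bruhat order), then t is λ-row-dominated on 1,…,j. In particular, if s ∈ Std^λ(μ) and s ⊴ t, then t ∈ Std^λ(μ). -/

import Mathlib

namespace FS

open scoped Classical

/-- A node `(r, c, m)`: row `r`, column `c`, component `m` (all 1-based). -/
abbrev Node := ℕ × ℕ × ℕ

/-- Membership of a node in the Young diagram of the multipartition `p`,
where `p m r` is the `r`-th part of the `m`-th component. -/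
def InDiag (p : ℕ → ℕ → ℕ) (A : Node) : Prop :=
  1 ≤ A.2.1 ∧ A.2.1 ≤ p A.2.2 A.1

/-- `p` is an `l`-multipartition of `n` (components indexed `1,…,l`, rows indexed `1,…`). -/
def IsMP (l n : ℕ) (p : ℕ → ℕ → ℕ) : Prop :=
  (∀ m r, (m = 0 ∨ l < m ∨ r = 0 ∨ n < r) → p m r = 0) ∧
  (∀ m r, 1 ≤ r → p m (r + 1) ≤ p m r) ∧
  (∑ m ∈ Finset.Icc 1 l, ∑ r ∈ Finset.Icc 1 n, p m r) = n

/-- Total size of an `l`-multicomposition (rows bounded by `n`). -/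
def mpSize (l n : ℕ) (p : ℕ → ℕ → ℕ) : ℕ :=
  ∑ m ∈ Finset.Icc 1 l, ∑ r ∈ Finset.Icc 1 n, p m r

/-- Size of the `m`-th component. -/
def compSize (n : ℕ) (p : ℕ → ℕ → ℕ) (m : ℕ) : ℕ :=
  ∑ r ∈ Finset.Icc 1 n, p m r

/-- Length of column `c` of component `m`, i.e. `(p^(m))'_c`. -/
def colLen (n : ℕ) (p : ℕ → ℕ → ℕ) (m c : ℕ) : ℕ :=
  ((Finset.Icc 1 n).filter fun r => c ≤ p m r).card

/-- Dominance order on `l`-multicompositions: `Dom l N p q` means `p ⊵ q`. -/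
def Dom (l N : ℕ) (p q : ℕ → ℕ → ℕ) : Prop :=
  ∀ m r, 1 ≤ m → m ≤ l →
    (∑ m' ∈ Finset.Icc 1 (m - 1), compSize N q m') + ∑ r' ∈ Finset.Icc 1 r, q m r' ≤
      (∑ m' ∈ Finset.Icc 1 (m - 1), compSize N p m') + ∑ r' ∈ Finset.Icc 1 r, p m r'

/-- `t` is a `p`-tableau: a bijection from the diagram of `p` onto `{1,…,n}`. -/
def IsTab (n : ℕ) (p : ℕ → ℕ → ℕ) (t : Node → ℕ) : Prop :=
  (∀ A, InDiag p A → 1 ≤ t A ∧ t A ≤ n) ∧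
  (∀ A B, InDiag p A → InDiag p B → t A = t B → A = B) ∧
  (∀ i, 1 ≤ i → i ≤ n → ∃ A, InDiag p A ∧ t A = i)

/-- Entries increase from left to right along each row. -/
def RowStrict (p : ℕ → ℕ → ℕ) (t : Node → ℕ) : Prop :=
  ∀ r c m, InDiag p (r, c, m) → InDiag p (r, c + 1, m) → t (r, c, m) < t (r, c + 1, m)

/-- Entries increase down each column. -/
def ColStrict (p : ℕ → ℕ → ℕ) (t : Node → ℕ) : Prop :=
  ∀ r c m, InDiag p (r, c, m) → InDiag p (r + 1, c, m) → t (r, c, m) < t (r + 1, c, m)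

/-- A standard tableau is both row-strict and column-strict. -/
def IsStd (p : ℕ → ℕ → ℕ) (t : Node → ℕ) : Prop := RowStrict p t ∧ ColStrict p t

/-- The tableau `t_λ`, obtained by writing `1,…,n` in order down successive columns
from left to right (components from `l` down to `1`). -/
def colTab (l n : ℕ) (p : ℕ → ℕ → ℕ) : Node → ℕ := fun A =>
  (∑ m' ∈ Finset.Icc (A.2.2 + 1) l, compSize n p m') +
    (∑ c' ∈ Finset.Icc 1 (A.2.1 - 1), colLen n p A.2.2 c') + A.1

/-- The tableau `t^λ`, obtained by writing `1,…,n` in order along successive rows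
from top to bottom (components from `1` up to `l`). -/
def rowTab (n : ℕ) (p : ℕ → ℕ → ℕ) : Node → ℕ := fun A =>
  (∑ m' ∈ Finset.Icc 1 (A.2.2 - 1), compSize n p m') +
    (∑ r' ∈ Finset.Icc 1 (A.1 - 1), p A.2.2 r') + A.2.1

/-- The Coxeter generator `s_i = (i, i+1)` of the symmetric group. -/
def sw (i : ℕ) : Equiv.Perm ℕ := Equiv.swap i (i + 1)

/-- The product `s_{i_1} ⋯ s_{i_k}` corresponding to a word `L = [i_1,…,i_k]`. -/
def wordProd (L : List ℕ) : Equiv.Perm ℕ := (L.map sw).prod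

/-- `L` is an expression for `w` in the Coxeter generators `s_1,…,s_{n-1}` of `S_n`. -/
def IsWord (n : ℕ) (L : List ℕ) (w : Equiv.Perm ℕ) : Prop :=
  (∀ i ∈ L, 1 ≤ i ∧ i + 1 ≤ n) ∧ wordProd L = w

/-- The Coxeter length of `w ∈ S_n`. -/
noncomputable def len (n : ℕ) (w : Equiv.Perm ℕ) : ℕ :=
  sInf {k | ∃ L, IsWord n L w ∧ L.length = k}

/-- `L` is a reduced expression for `w ∈ S_n`. -/
def IsReduced (n : ℕ) (L : List ℕ) (w : Equiv.Perm ℕ) : Prop :=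
  IsWord n L w ∧ L.length = len n w

/-- The Bruhat order on `S_n`: `x ≤ w` iff some reduced expression for `w` has an
expression for `x` as a subsequence. -/
def BruhatLE (n : ℕ) (x w : Equiv.Perm ℕ) : Prop :=
  ∃ L, IsReduced n L w ∧ ∃ L', L'.Sublist L ∧ wordProd L' = x

/-- Strict Bruhat order. -/
def BruhatLT (n : ℕ) (x w : Equiv.Perm ℕ) : Prop := BruhatLE n x w ∧ x ≠ w

/-- The left (weak) order on `S_n`: `x ≤_L w` iff `ℓ(w) = ℓ(w x⁻¹) + ℓ(x)`. -/
def LeftLE (n : ℕ) (x w : Equiv.Perm ℕ) : Prop :=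
  len n w = len n (w * x⁻¹) + len n x

/-- `w` is a permutation of `{1,…,n}` (fixing everything else). -/
def PermOf (n : ℕ) (w : Equiv.Perm ℕ) : Prop := ∀ i, i = 0 ∨ n < i → w i = i

/-- `w` is the permutation sending the base tableau `base` to the tableau `t`
(e.g. `w = w_t` when `base = t_λ`). -/
def IsPermOfTab (n : ℕ) (p : ℕ → ℕ → ℕ) (base t : Node → ℕ) (w : Equiv.Perm ℕ) : Prop :=
  PermOf n w ∧ ∀ A, InDiag p A → w (base A) = t A

/-- `Shape(t↓j)`: the multicomposition whose `(m, r)` entry is the number of nodes in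
row `r` of component `m` whose entry under `t` is at most `j`. -/
def shape (n : ℕ) (p : ℕ → ℕ → ℕ) (t : Node → ℕ) (j : ℕ) : ℕ → ℕ → ℕ :=
  fun m r => ((Finset.Icc 1 n).filter fun c => c ≤ p m r ∧ t (r, c, m) ≤ j).card

/-- `Shape(t↓j)'`: the conjugate multicomposition, whose `(m, c)` entry is the number of
nodes in column `c` of component `l + 1 - m` whose entry under `t` is at most `j`. -/
def shapeConj (l n : ℕ) (p : ℕ → ℕ → ℕ) (t : Node → ℕ) (j : ℕ) : ℕ → ℕ → ℕ :=
  fun m c => ((Finset.Icc 1 n).filter fun r => c ≤ p (l + 1 - m) r ∧ t (r, c, l + 1 - m) ≤ j).card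

/-- `A` lies weakly to the left of `B`. -/
def WeaklyLeft (A B : Node) : Prop :=
  B.2.2 < A.2.2 ∨ (A.2.2 = B.2.2 ∧ A.2.1 ≤ B.2.1)

/-- `A` lies weakly above `B`. -/
def WeaklyAbove (A B : Node) : Prop :=
  A.2.2 < B.2.2 ∨ (A.2.2 = B.2.2 ∧ A.1 ≤ B.1)

/-- `A` lies weakly to the right of `B`. -/
def WeaklyRight (A B : Node) : Prop :=
  A.2.2 < B.2.2 ∨ (A.2.2 = B.2.2 ∧ B.2.1 ≤ A.2.1)

/-- `t` (a `mu`-tableau) is `lam`-column-dominated on `1,…,j`: each `i ≤ j` appears in `t`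
at least as far to the left as it does in `t_lam`. -/
def ColDomOn (l n : ℕ) (lam mu : ℕ → ℕ → ℕ) (t : Node → ℕ) (j : ℕ) : Prop :=
  ∀ i A B, 1 ≤ i → i ≤ j → InDiag mu A → t A = i → InDiag lam B →
    colTab l n lam B = i → WeaklyLeft A B

/-- `t` is weakly `lam`-column-dominated on `1,…,j`: each `i ≤ j` appears in `t` in a
component at least as far to the left as it does in `t_lam`. -/
def WColDomOn (l n : ℕ) (lam mu : ℕ → ℕ → ℕ) (t : Node → ℕ) (j : ℕ) : Prop :=
  ∀ i A B, 1 ≤ i → i ≤ j → InDiag mu A → t A = i → InDiag lam B →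
    colTab l n lam B = i → B.2.2 ≤ A.2.2

/-- `t` (a `mu`-tableau) is `lam`-row-dominated on `1,…,j`: each `i ≤ j` appears in `t`
at least as high as it does in `t^lam`. -/
def RowDomOn (n : ℕ) (lam mu : ℕ → ℕ → ℕ) (t : Node → ℕ) (j : ℕ) : Prop :=
  ∀ i A B, 1 ≤ i → i ≤ j → InDiag mu A → t A = i → InDiag lam B →
    rowTab n lam B = i → WeaklyAbove A B

/-- The multipartition `λ_L(c, m)`: the first `c` columns of component `m`, followed by
components `m+1,…,l`. -/
def leftPart (lam : ℕ → ℕ → ℕ) (c m : ℕ) : ℕ → ℕ → ℕ := fun k r =>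
  if k = 0 then 0 else if k = 1 then min (lam m r) c else lam (m + k - 1) r

/-- The multipartition `λ_R(c, m)`: components `1,…,m-1`, followed by the part of
component `m` after its first `c` columns. -/
def rightPart (lam : ℕ → ℕ → ℕ) (c m : ℕ) : ℕ → ℕ → ℕ := fun k r =>
  if k < m then lam k r else if k = m then lam m r - c else 0

/-- The multipartition `λ_T(r₀, m)`: components `1,…,m-1`, followed by the first `r₀`
rows of component `m`. -/
def topPart (lam : ℕ → ℕ → ℕ) (r₀ m : ℕ) : ℕ → ℕ → ℕ := fun k r =>
  if k < m then lam k r else if k = m then (if r ≤ r₀ then lam m r else 0) else 0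

/-- The multipartition `λ_B(r₀, m)`: the rows of component `m` after row `r₀`, followed
by components `m+1,…,l`. -/
def botPart (lam : ℕ → ℕ → ℕ) (r₀ m : ℕ) : ℕ → ℕ → ℕ := fun k r =>
  if k = 0 ∨ r = 0 then 0 else if k = 1 then lam m (r₀ + r) else lam (m + k - 1) r

/-- The glued tableau `t_L # t_R`: places `1,…,n_L` on the left part as in `t_L`, and
places `n_L + t_R(A)` at the node corresponding to each node `A` of the right part. -/
def glueLR (nL c m : ℕ) (tL tR : Node → ℕ) : Node → ℕ := fun A =>
  if A.2.2 < m then nL + tR A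
  else if A.2.2 = m then
    (if A.2.1 ≤ c then tL (A.1, A.2.1, 1) else nL + tR (A.1, A.2.1 - c, m))
  else tL (A.1, A.2.1, A.2.2 - m + 1)

/-- The tableau `t⁺` obtained from a tableau `t` of `μ_R(1,m)` by increasing all entries
by `k`, adjoining a first column with entries `1,…,k` to component `m`, and adjoining
empty components `m+1,…,l`. -/
def addFirstCol (k m : ℕ) (t : Node → ℕ) : Node → ℕ := fun A =>
  if A.2.2 = m then (if A.2.1 = 1 then A.1 else k + t (A.1, A.2.1 - 1, m))
  else k + t A

/-- The tableau `t⁺` obtained from a tableau `t` of `μ_L(d-1,m)` by adjoining empty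
components `1,…,m-1` and adjoining a column `d` to component `m` with entries
`nk+1,…,nk+k` from top to bottom. -/
def addLastCol (nk m d : ℕ) (t : Node → ℕ) : Node → ℕ := fun A =>
  if A.2.2 = m then (if A.2.1 = d then nk + A.1 else t (A.1, A.2.1, 1))
  else t (A.1, A.2.1, A.2.2 - m + 1)

/-- The `i`-th smallest element of a finite set of naturals (1-based). -/
def nthElt (S : Finset ℕ) (i : ℕ) : ℕ := (S.sort (· ≤ ·)).getD (i - 1) 0

/-- The set `S_B` of entries of `t_λ` lying in the bottom region (component `> m`, or
component `m` in a row `> r₀`). -/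
noncomputable def SB (l n : ℕ) (lam : ℕ → ℕ → ℕ) (r₀ m : ℕ) : Finset ℕ :=
  (Finset.Icc 1 n).filter fun i =>
    ∃ A, InDiag lam A ∧ colTab l n lam A = i ∧ (m < A.2.2 ∨ (A.2.2 = m ∧ r₀ < A.1))

/-- The glued tableau `t #̄ s`: on the bottom region the entries are `lab_B ∘ t` and on
the top region they are `lab_T ∘ s`, where `lab_B`, `lab_T` are the order-preserving
bijections onto `S_B`, `S_T`. -/
def glueBT (S_B S_T : Finset ℕ) (r₀ m : ℕ) (tB tT : Node → ℕ) : Node → ℕ := fun A =>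
  if A.2.2 < m then nthElt S_T (tT A)
  else if A.2.2 = m then
    (if A.1 ≤ r₀ then nthElt S_T (tT A) else nthElt S_B (tB (A.1 - r₀, A.2.1, 1)))
  else nthElt S_B (tB (A.1, A.2.1, A.2.2 - m + 1))

/-- The residue of a node `(r, c, m)` with respect to the multicharge `κ`:
`κ_m + c - r` in `ℤ/eℤ` (with `ZMod 0 = ℤ` encoding `e = ∞`). -/
def resNode (e : ℕ) (κ : ℕ → ZMod e) (A : Node) : ZMod e :=
  κ A.2.2 + (A.2.1 : ZMod e) - (A.1 : ZMod e)

/-!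
If `x ≤ w` in the Bruhat order then `#{p ≤ K | w p ≤ i} ≤ #{p ≤ K | x p ≤ i}` for all `K`, `i`:
length equals the number of inversions, so every letter of a reduced word is an ascent, right
multiplication by an ascent `s_k` can only lower these rank numbers, and the comparison survives
passing to a subword.

Row dominance of `s` puts every entry `≤ i` of `s` weakly above the node `B` of `i` in `t^λ`.
If the node `A` of `i` in `t` were not weakly above `B`, then some initial segment of the column
reading `t_μ` would hold more entries `≤ i` of the standard tableau `t` than of `s`, contradicting
the rank inequality for `w_s ≤ w_t`.
-/

lemma sw_apply (k x : ℕ) : sw k x = if x = k then k + 1 else if x = k + 1 then k else x := by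
  simp [sw, Equiv.swap_apply_def]

lemma sw_apply_left (k : ℕ) : sw k k = k + 1 := Equiv.swap_apply_left _ _

lemma sw_apply_right (k : ℕ) : sw k (k + 1) = k := Equiv.swap_apply_right _ _

lemma sw_mul_self (k : ℕ) : sw k * sw k = 1 := Equiv.swap_mul_self _ _

lemma wordProd_concat (L : List ℕ) (k : ℕ) : wordProd (L ++ [k]) = wordProd L * sw k := by
  simp [wordProd]

section Inversions

variable {n : ℕ}

lemma PermOf.mul {v w : Equiv.Perm ℕ} (hv : PermOf n v) (hw : PermOf n w) : PermOf n (v * w) :=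
  fun i hi => by simp [hw i hi, hv i hi]

lemma permOf_sw {k : ℕ} (hk : 1 ≤ k) (hkn : k + 1 ≤ n) : PermOf n (sw k) := by
  intro i hi
  rw [sw_apply]
  split_ifs <;> omega

lemma permOf_wordProd {L : List ℕ} (hL : ∀ i ∈ L, 1 ≤ i ∧ i + 1 ≤ n) :
    PermOf n (wordProd L) := by
  induction L using List.reverseRecOn with
  | nil => exact fun _ _ => rfl
  | append_singleton M k ih =>
    rw [wordProd_concat]
    have hk := hL k (by simp)
    exact (ih fun i hi => hL i (by simp [hi])).mul (permOf_sw hk.1 hk.2)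

lemma PermOf.eq_one_of_forall_lt_succ {w : Equiv.Perm ℕ} (hw : PermOf n w)
    (hinc : ∀ p, 1 ≤ p → p + 1 ≤ n → w p < w (p + 1)) : w = 1 := by
  have hle : ∀ p ∈ Finset.Icc 1 n, p ≤ w p := by
    intro p hp
    rw [Finset.mem_Icc] at hp
    induction p, hp.1 using Nat.le_induction with
    | base =>
      refine Nat.one_le_iff_ne_zero.2 fun h0 => ?_
      simpa using w.injective (h0.trans (hw 0 (Or.inl rfl)).symm)
    | succ p hp1 ih => exact (ih ⟨hp1, by omega⟩).trans_lt (hinc p hp1 hp.2)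
  have hsum : ∑ p ∈ Finset.Icc 1 n, p = ∑ p ∈ Finset.Icc 1 n, w p :=
    (w.sum_comp _ id fun a ha => by
      by_contra h
      exact ha (hw a (by simp only [Finset.coe_Icc, Set.mem_Icc] at h; omega))).symm
  have hfix := (Finset.sum_eq_sum_iff_of_le hle).1 hsum
  ext p
  by_cases hp : p ∈ Finset.Icc 1 n
  · exact (hfix p hp).symm
  · exact hw p (by simp only [Finset.mem_Icc] at hp; omega)

lemma PermOf.exists_descent {w : Equiv.Perm ℕ} (hw : PermOf n w) (h1 : w ≠ 1) :
    ∃ k, 1 ≤ k ∧ k + 1 ≤ n ∧ w (k + 1) < w k := by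
  by_contra! h
  exact h1 (hw.eq_one_of_forall_lt_succ fun p hp hpn =>
    (h p hp hpn).lt_of_ne (w.injective.ne (by omega)))

def invSet (n : ℕ) (v : Equiv.Perm ℕ) : Finset (ℕ × ℕ) :=
  (Finset.Icc 1 n ×ˢ Finset.Icc 1 n).filter fun q => q.1 < q.2 ∧ v q.2 < v q.1

def numInv (n : ℕ) (v : Equiv.Perm ℕ) : ℕ := (invSet n v).card

lemma numInv_one : numInv n 1 = 0 := by
  rw [numInv, invSet, Finset.card_eq_zero, Finset.filter_eq_empty_iff]
  intro q _
  simp only [Equiv.Perm.one_apply]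
  omega

lemma mem_invSet_erase_swap {v : Equiv.Perm ℕ} {k : ℕ} (hk : 1 ≤ k) (hkn : k + 1 ≤ n)
    {q : ℕ × ℕ} (hq : q ∈ (invSet n (v * sw k)).erase (k, k + 1)) :
    (sw k q.1, sw k q.2) ∈ (invSet n v).erase (k, k + 1) := by
  obtain ⟨a, b⟩ := q
  simp only [invSet, Finset.mem_erase, Finset.mem_filter, Finset.mem_product, Finset.mem_Icc,
    ne_eq, Prod.mk.injEq] at hq ⊢
  refine ⟨?_, ?_, ?_, by simpa using hq.2.2.2⟩ <;> simp only [sw_apply] <;> split_ifs <;> omega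

/-- The bijection is `(a, b) ↦ (s_k a, s_k b)`. -/
lemma card_invSet_mul_sw_erase (v : Equiv.Perm ℕ) {k : ℕ} (hk : 1 ≤ k) (hkn : k + 1 ≤ n) :
    ((invSet n (v * sw k)).erase (k, k + 1)).card = ((invSet n v).erase (k, k + 1)).card := by
  have hinv : ∀ x, sw k (sw k x) = x := fun x => by rw [sw_apply, sw_apply]; split_ifs <;> omega
  refine Finset.card_nbij' (fun q => (sw k q.1, sw k q.2)) (fun q => (sw k q.1, sw k q.2))
    (fun q hq => mem_invSet_erase_swap hk hkn hq) (fun q hq => ?_) (fun q _ => by simp [hinv])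
    (fun q _ => by simp [hinv])
  refine mem_invSet_erase_swap (v := v * sw k) hk hkn ?_
  rwa [mul_assoc, sw_mul_self, mul_one]

lemma numInv_mul_sw_of_lt {v : Equiv.Perm ℕ} {k : ℕ} (hk : 1 ≤ k) (hkn : k + 1 ≤ n)
    (hasc : v k < v (k + 1)) : numInv n (v * sw k) = numInv n v + 1 := by
  have hin : (k, k + 1) ∈ invSet n (v * sw k) := by
    rw [invSet, Finset.mem_filter]
    simp only [Finset.mem_product, Finset.mem_Icc, Equiv.Perm.mul_apply, sw_apply_left,
      sw_apply_right]
    omega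
  have hout : (k, k + 1) ∉ invSet n v := by
    simp only [invSet, Finset.mem_filter, not_and, not_lt]
    omega
  have := card_invSet_mul_sw_erase v hk hkn
  rw [Finset.erase_eq_of_notMem hout] at this
  rw [numInv, numInv, ← Finset.card_erase_add_one hin, this]

lemma numInv_mul_sw_of_gt {v : Equiv.Perm ℕ} {k : ℕ} (hk : 1 ≤ k) (hkn : k + 1 ≤ n)
    (hdesc : v (k + 1) < v k) : numInv n (v * sw k) + 1 = numInv n v := by
  have := numInv_mul_sw_of_lt (v := v * sw k) hk hkn
    (by simpa only [Equiv.Perm.mul_apply, sw_apply_left, sw_apply_right] using hdesc)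
  rwa [mul_assoc, sw_mul_self, mul_one, eq_comm] at this

lemma numInv_mul_sw_le (v : Equiv.Perm ℕ) {k : ℕ} (hk : 1 ≤ k) (hkn : k + 1 ≤ n) :
    numInv n (v * sw k) ≤ numInv n v + 1 := by
  rcases lt_or_gt_of_ne (v.injective.ne (show k ≠ k + 1 by omega)) with h | h
  · exact (numInv_mul_sw_of_lt hk hkn h).le
  · have := numInv_mul_sw_of_gt hk hkn h
    omega

lemma numInv_wordProd_le_length {L : List ℕ} (hL : ∀ i ∈ L, 1 ≤ i ∧ i + 1 ≤ n) :
    numInv n (wordProd L) ≤ L.length := by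
  induction L using List.reverseRecOn with
  | nil => simp [wordProd, numInv_one]
  | append_singleton M k ih =>
    have hk := hL k (by simp)
    have := numInv_mul_sw_le (wordProd M) hk.1 hk.2
    have := ih fun i hi => hL i (by simp [hi])
    rw [wordProd_concat, List.length_append, List.length_singleton]
    omega

lemma PermOf.exists_isWord_length_eq_numInv {w : Equiv.Perm ℕ} (hw : PermOf n w) :
    ∃ L, IsWord n L w ∧ L.length = numInv n w := by
  induction hN : numInv n w generalizing w with
  | zero =>
    by_cases h1 : w = 1
    · exact ⟨[], ⟨by simp, by simp [h1, wordProd]⟩, rfl⟩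
    obtain ⟨k, hk, hkn, hdesc⟩ := hw.exists_descent h1
    have := numInv_mul_sw_of_gt hk hkn hdesc
    omega
  | succ N ih =>
    have h1 : w ≠ 1 := by rintro rfl; simp [numInv_one] at hN
    obtain ⟨k, hk, hkn, hdesc⟩ := hw.exists_descent h1
    obtain ⟨L, ⟨hL, hLw⟩, hlen⟩ := ih (hw.mul (permOf_sw hk hkn))
      (by have := numInv_mul_sw_of_gt hk hkn hdesc; omega)
    refine ⟨L ++ [k], ⟨fun i hi => ?_, ?_⟩, by simp [hlen]⟩
    · rcases List.mem_append.1 hi with hi | hi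
      · exact hL i hi
      · obtain rfl := List.mem_singleton.1 hi
        exact ⟨hk, hkn⟩
    · rw [wordProd_concat, hLw, mul_assoc, sw_mul_self, mul_one]

lemma len_wordProd {L : List ℕ} (hL : ∀ i ∈ L, 1 ≤ i ∧ i + 1 ≤ n) :
    len n (wordProd L) = numInv n (wordProd L) := by
  refine le_antisymm ?_ (le_csInf ⟨_, L, ⟨hL, rfl⟩, rfl⟩ ?_)
  · obtain ⟨M, hM, hlen⟩ := (permOf_wordProd hL).exists_isWord_length_eq_numInv
    exact Nat.sInf_le ⟨M, hM, hlen⟩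
  · rintro _ ⟨M, ⟨hM, hMw⟩, rfl⟩
    exact hMw ▸ numInv_wordProd_le_length hM

lemma IsReduced.concat {M : List ℕ} {k : ℕ} (h : IsReduced n (M ++ [k]) (wordProd (M ++ [k]))) :
    IsReduced n M (wordProd M) ∧ wordProd M k < wordProd M (k + 1) := by
  obtain ⟨⟨hL, -⟩, hlen⟩ := h
  have hM : ∀ i ∈ M, 1 ≤ i ∧ i + 1 ≤ n := fun i hi => hL i (by simp [hi])
  have hk := hL k (by simp)
  rw [len_wordProd hL, wordProd_concat, List.length_append, List.length_singleton] at hlen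
  have hle := numInv_wordProd_le_length hM
  have hasc : wordProd M k < wordProd M (k + 1) := by
    by_contra! h
    have := numInv_mul_sw_of_gt hk.1 hk.2 (h.lt_of_ne ((wordProd M).injective.ne (by omega)))
    omega
  have := numInv_mul_sw_of_lt hk.1 hk.2 hasc
  exact ⟨⟨⟨hM, rfl⟩, by rw [len_wordProd hM]; omega⟩, hasc⟩

end Inversions

section Rank

/-- The rank matrix of `v`. -/
def bruhatRank (v : Equiv.Perm ℕ) (K i : ℕ) : ℕ :=
  ((Finset.Icc 1 K).filter fun p => v p ≤ i).card

variable {i : ℕ}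

lemma bruhatRank_succ (v : Equiv.Perm ℕ) (K : ℕ) :
    bruhatRank v (K + 1) i = bruhatRank v K i + if v (K + 1) ≤ i then 1 else 0 := by
  simp only [bruhatRank, Finset.card_filter]
  exact Finset.sum_Icc_succ_top (by omega) _

lemma bruhatRank_mul_sw_of_ne (v : Equiv.Perm ℕ) {k K : ℕ} (hk : 1 ≤ k) (hK : K ≠ k) :
    bruhatRank (v * sw k) K i = bruhatRank v K i := by
  refine Finset.card_nbij' (sw k) (sw k) ?_ ?_ ?_ ?_ <;> intro p <;>
    simp only [Finset.coe_filter, Finset.mem_Icc, Set.mem_ofPred_eq, Equiv.Perm.mul_apply,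
      sw_apply] <;> split_ifs <;> subst_vars <;> omega

lemma bruhatRank_mul_sw_self (v : Equiv.Perm ℕ) (m : ℕ) :
    bruhatRank (v * sw (m + 1)) (m + 1) i =
      bruhatRank v m i + if v (m + 1 + 1) ≤ i then 1 else 0 := by
  rw [bruhatRank_succ, bruhatRank_mul_sw_of_ne v (by omega) (by omega), Equiv.Perm.mul_apply,
    sw_apply_left]

lemma bruhatRank_mul_sw_le {u : Equiv.Perm ℕ} {k : ℕ} (hk : 1 ≤ k) (hasc : u k < u (k + 1))
    (K : ℕ) : bruhatRank (u * sw k) K i ≤ bruhatRank u K i := by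
  rcases eq_or_ne K k with rfl | hK
  · obtain ⟨m, rfl⟩ : ∃ m, K = m + 1 := ⟨K - 1, by omega⟩
    rw [bruhatRank_mul_sw_self, bruhatRank_succ]
    split_ifs <;> omega
  · rw [bruhatRank_mul_sw_of_ne u hk hK]

/-- The comparison at `K = k` uses the rows `k - 1` and `k + 1` of the hypothesis together with
the ascent `u k < u (k + 1)`. -/
lemma bruhatRank_mul_sw_mono {u y : Equiv.Perm ℕ} {k : ℕ} (hk : 1 ≤ k)
    (hasc : u k < u (k + 1)) (h : ∀ K, bruhatRank u K i ≤ bruhatRank y K i) (K : ℕ) :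
    bruhatRank (u * sw k) K i ≤ bruhatRank (y * sw k) K i := by
  rcases eq_or_ne K k with rfl | hK
  · obtain ⟨m, rfl⟩ : ∃ m, K = m + 1 := ⟨K - 1, by omega⟩
    have h0 := h m
    have h2 := h (m + 1 + 1)
    rw [bruhatRank_succ u (m + 1), bruhatRank_succ u m, bruhatRank_succ y (m + 1),
      bruhatRank_succ y m] at h2
    rw [bruhatRank_mul_sw_self, bruhatRank_mul_sw_self]
    split_ifs at h2 ⊢ <;> omega
  · rw [bruhatRank_mul_sw_of_ne u hk hK, bruhatRank_mul_sw_of_ne y hk hK]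
    exact h K

lemma bruhatRank_le_of_sublist {n : ℕ} {L : List ℕ} (hL : IsReduced n L (wordProd L))
    {L' : List ℕ} (hsub : L'.Sublist L) (K : ℕ) :
    bruhatRank (wordProd L) K i ≤ bruhatRank (wordProd L') K i := by
  induction L using List.reverseRecOn generalizing L' K with
  | nil => rw [List.sublist_nil.1 hsub]
  | append_singleton M k ih =>
    obtain ⟨hM, hasc⟩ := hL.concat
    have hk : 1 ≤ k := (hL.1.1 k (by simp)).1
    obtain ⟨L₁, L₂, rfl, h₁, h₂⟩ := List.sublist_append_iff.1 hsub
    rw [wordProd_concat]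
    rcases List.sublist_singleton.1 h₂ with rfl | rfl
    · rw [List.append_nil]
      exact (bruhatRank_mul_sw_le hk hasc K).trans (ih hM h₁ K)
    · rw [wordProd_concat]
      exact bruhatRank_mul_sw_mono hk hasc (ih hM h₁) K

end Rank

lemma BruhatLE.bruhatRank_le {n : ℕ} {x w : Equiv.Perm ℕ} (h : BruhatLE n x w) (K i : ℕ) :
    bruhatRank w K i ≤ bruhatRank x K i := by
  obtain ⟨L, hL, L', hsub, rfl⟩ := h
  obtain rfl := hL.1.2
  exact bruhatRank_le_of_sublist hL hsub K

lemma sum_Icc_pred_add_le (f : ℕ → ℕ) {a M : ℕ} (ha : 1 ≤ a) (haM : a ≤ M) :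
    (∑ x ∈ Finset.Icc 1 (a - 1), f x) + f a ≤ ∑ x ∈ Finset.Icc 1 M, f x := by
  obtain ⟨b, rfl⟩ : ∃ b, a = b + 1 := ⟨a - 1, by omega⟩
  rw [Nat.add_sub_cancel, ← Finset.sum_Icc_succ_top (by omega)]
  exact Finset.sum_le_sum_of_subset (Finset.Icc_subset_Icc le_rfl haM)

lemma add_sum_Icc_le (f : ℕ → ℕ) {a b l : ℕ} (hab : a < b) (hbl : b ≤ l) :
    f b + ∑ x ∈ Finset.Icc (b + 1) l, f x ≤ ∑ x ∈ Finset.Icc (a + 1) l, f x := by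
  rw [← Finset.sum_insert (by simp), Finset.insert_Icc_add_one_left_eq_Icc hbl]
  exact Finset.sum_le_sum_of_subset (Finset.Icc_subset_Icc hab le_rfl)

lemma exists_sum_Icc_lt_le (f : ℕ → ℕ) {x : ℕ} (hx : 1 ≤ x) {N : ℕ}
    (hN : x ≤ ∑ y ∈ Finset.Icc 1 N, f y) :
    ∃ k, 1 ≤ k ∧ k ≤ N ∧ ∑ y ∈ Finset.Icc 1 (k - 1), f y < x ∧
      x ≤ (∑ y ∈ Finset.Icc 1 (k - 1), f y) + f k := by
  induction N with
  | zero =>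
    rw [Finset.Icc_eq_empty_of_lt zero_lt_one, Finset.sum_empty] at hN
    omega
  | succ N ih =>
    by_cases h : x ≤ ∑ y ∈ Finset.Icc 1 N, f y
    · obtain ⟨k, hk⟩ := ih h
      exact ⟨k, hk.1, by omega, hk.2.2⟩
    · rw [Finset.sum_Icc_succ_top (by omega)] at hN
      exact ⟨N + 1, by omega, le_rfl, by simpa using h, by simpa using hN⟩

section Multipartition

variable {l n : ℕ} {p : ℕ → ℕ → ℕ}

lemma IsMP.part_antitone (hp : IsMP l n p) {m r₁ r₂ : ℕ} (h₁ : 1 ≤ r₁)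
    (h : r₁ ≤ r₂) : p m r₂ ≤ p m r₁ := by
  induction r₂, h using Nat.le_induction with
  | base => exact le_rfl
  | succ r₂ hr ih => exact (hp.2.1 m r₂ (h₁.trans hr)).trans ih

lemma IsMP.part_le (hp : IsMP l n p) (m r : ℕ) : p m r ≤ n := by
  by_cases h : m = 0 ∨ l < m ∨ r = 0 ∨ n < r
  · rw [hp.1 m r h]
    exact Nat.zero_le n
  push Not at h
  calc p m r ≤ compSize n p m :=
        Finset.single_le_sum (fun _ _ => Nat.zero_le _) (Finset.mem_Icc.2 ⟨by omega, h.2.2.2⟩)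
    _ ≤ ∑ m' ∈ Finset.Icc 1 l, compSize n p m' :=
        Finset.single_le_sum (f := compSize n p) (fun _ _ => Nat.zero_le _)
          (Finset.mem_Icc.2 ⟨by omega, h.2.1⟩)
    _ = n := hp.2.2

lemma inDiag_mk {r c m : ℕ} : InDiag p (r, c, m) ↔ 1 ≤ c ∧ c ≤ p m r := Iff.rfl

lemma IsMP.bounds_of_inDiag (hp : IsMP l n p) {r c m : ℕ} (h : InDiag p (r, c, m)) :
    1 ≤ r ∧ r ≤ n ∧ 1 ≤ m ∧ m ≤ l ∧ 1 ≤ c ∧ c ≤ p m r := by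
  obtain ⟨hc, hcp⟩ := inDiag_mk.1 h
  have hne : ¬(m = 0 ∨ l < m ∨ r = 0 ∨ n < r) := fun h0 => by
    simp only [hp.1 m r h0] at hcp
    omega
  omega

lemma IsMP.compSize_eq_sum_colLen (hp : IsMP l n p) (m : ℕ) :
    compSize n p m = ∑ c ∈ Finset.Icc 1 n, colLen n p m c := by
  have hrow : ∀ r ∈ Finset.Icc 1 n,
      p m r = ((Finset.Icc 1 n).filter fun c => c ≤ p m r).card := by
    intro r _
    have hle := hp.part_le m r
    rw [show (Finset.Icc 1 n).filter (· ≤ p m r) = Finset.Icc 1 (p m r) by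
        ext c
        simp only [Finset.mem_filter, Finset.mem_Icc]
        omega,
      Nat.card_Icc, Nat.add_sub_cancel]
  simp only [compSize, colLen, Finset.sum_congr rfl hrow, Finset.card_filter]
  exact Finset.sum_comm

lemma IsMP.le_colLen (hp : IsMP l n p) {r c m : ℕ} (h : InDiag p (r, c, m)) :
    r ≤ colLen n p m c := by
  obtain ⟨-, hrn, -, -, -, hcp⟩ := hp.bounds_of_inDiag h
  have hsub : Finset.Icc 1 r ⊆ (Finset.Icc 1 n).filter fun r' => c ≤ p m r' := fun r' hr' => by
    rw [Finset.mem_Icc] at hr'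
    exact Finset.mem_filter.2 ⟨Finset.mem_Icc.2 ⟨hr'.1, by omega⟩,
      hcp.trans (hp.part_antitone hr'.1 hr'.2)⟩
  simpa [colLen] using Finset.card_le_card hsub

lemma IsMP.sum_colLen_add_le_compSize (hp : IsMP l n p) {r c m : ℕ} (h : InDiag p (r, c, m)) :
    (∑ c' ∈ Finset.Icc 1 (c - 1), colLen n p m c') + r ≤ compSize n p m := by
  obtain ⟨-, -, -, -, hc, hcp⟩ := hp.bounds_of_inDiag h
  have := sum_Icc_pred_add_le (colLen n p m) hc (hcp.trans (hp.part_le m r))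
  have := hp.le_colLen h
  rw [hp.compSize_eq_sum_colLen]
  omega

lemma IsMP.colTab_lt_of_comp_lt (hp : IsMP l n p) {X Y : Node} (hX : InDiag p X)
    (hY : InDiag p Y) (h : X.2.2 < Y.2.2) : colTab l n p Y < colTab l n p X := by
  obtain ⟨rX, cX, mX⟩ := X
  obtain ⟨rY, cY, mY⟩ := Y
  dsimp only at h
  obtain ⟨hrX, -⟩ := hp.bounds_of_inDiag hX
  obtain ⟨-, -, -, hmY, -⟩ := hp.bounds_of_inDiag hY
  have := hp.sum_colLen_add_le_compSize hY
  have := add_sum_Icc_le (compSize n p) h hmY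
  simp only [colTab]
  omega

lemma IsMP.colTab_lt_of_col_lt (hp : IsMP l n p) {X Y : Node} (hX : InDiag p X)
    (hY : InDiag p Y) (hm : X.2.2 = Y.2.2) (hc : X.2.1 < Y.2.1) :
    colTab l n p X < colTab l n p Y := by
  obtain ⟨rX, cX, m⟩ := X
  obtain ⟨rY, cY, mY⟩ := Y
  dsimp only at hm hc
  subst hm
  obtain ⟨-, -, -, -, hcX, -⟩ := hp.bounds_of_inDiag hX
  obtain ⟨hrY, -⟩ := hp.bounds_of_inDiag hY
  have := hp.le_colLen hX
  have := sum_Icc_pred_add_le (colLen n p m) hcX (show cX ≤ cY - 1 by omega)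
  simp only [colTab]
  omega

lemma IsMP.colTab_le_of_le (hp : IsMP l n p) {X Y : Node} (hX : InDiag p X)
    (hY : InDiag p Y) (hm : X.2.2 = Y.2.2) (hc : X.2.1 ≤ Y.2.1) (hr : X.1 ≤ Y.1) :
    colTab l n p X ≤ colTab l n p Y := by
  rcases hc.lt_or_eq with hc | hc
  · exact (hp.colTab_lt_of_col_lt hX hY hm hc).le
  · simp only [colTab, hm, hc]
    omega

lemma IsMP.weaklyLeft_of_colTab_le (hp : IsMP l n p) {X Y : Node} (hX : InDiag p X)
    (hY : InDiag p Y) (h : colTab l n p X ≤ colTab l n p Y) : WeaklyLeft X Y := by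
  by_contra hXY
  simp only [WeaklyLeft, not_or, not_and, not_le, not_lt] at hXY
  rcases hXY.1.lt_or_eq with hm | hm
  · exact (hp.colTab_lt_of_comp_lt hX hY hm).not_ge h
  · exact (hp.colTab_lt_of_col_lt hY hX hm.symm (hXY.2 hm)).not_ge h

lemma IsMP.rowTab_lt_of_comp_lt (hp : IsMP l n p) {X Y : Node} (hX : InDiag p X)
    (hY : InDiag p Y) (h : X.2.2 < Y.2.2) : rowTab n p X < rowTab n p Y := by
  obtain ⟨rX, cX, mX⟩ := X
  obtain ⟨rY, cY, mY⟩ := Y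
  dsimp only at h
  obtain ⟨hrX, hrXn, hmX, -, -, hcX⟩ := hp.bounds_of_inDiag hX
  obtain ⟨-, -, -, -, hcY, -⟩ := hp.bounds_of_inDiag hY
  have hrow : (∑ r' ∈ Finset.Icc 1 (rX - 1), p mX r') + p mX rX ≤ compSize n p mX :=
    sum_Icc_pred_add_le (p mX) hrX hrXn
  have := sum_Icc_pred_add_le (compSize n p) hmX (show mX ≤ mY - 1 by omega)
  simp only [rowTab]
  omega

lemma IsMP.rowTab_lt_of_row_lt (hp : IsMP l n p) {X Y : Node} (hX : InDiag p X)
    (hY : InDiag p Y) (hm : X.2.2 = Y.2.2) (hr : X.1 < Y.1) : rowTab n p X < rowTab n p Y := by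
  obtain ⟨rX, cX, m⟩ := X
  obtain ⟨rY, cY, mY⟩ := Y
  dsimp only at hm hr
  subst hm
  obtain ⟨hrX, -, -, -, -, hcX⟩ := hp.bounds_of_inDiag hX
  obtain ⟨-, -, -, -, hcY, -⟩ := hp.bounds_of_inDiag hY
  have := sum_Icc_pred_add_le (p m) hrX (show rX ≤ rY - 1 by omega)
  simp only [rowTab]
  omega

lemma IsMP.weaklyAbove_of_rowTab_le (hp : IsMP l n p) {X Y : Node} (hX : InDiag p X)
    (hY : InDiag p Y) (h : rowTab n p X ≤ rowTab n p Y) : WeaklyAbove X Y := by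
  by_contra hXY
  simp only [WeaklyAbove, not_or, not_and, not_le, not_lt] at hXY
  rcases hXY.1.lt_or_eq with hm | hm
  · exact (hp.rowTab_lt_of_comp_lt hY hX hm).not_ge h
  · exact (hp.rowTab_lt_of_row_lt hY hX hm (hXY.2 hm.symm)).not_ge h

lemma IsMP.exists_rowTab_eq (hp : IsMP l n p) {i : ℕ} (hi : 1 ≤ i) (hin : i ≤ n) :
    ∃ B, InDiag p B ∧ rowTab n p B = i := by
  obtain ⟨m, -, -, hm, hmi⟩ :=
    exists_sum_Icc_lt_le (compSize n p) hi (N := l) (hp.2.2.symm ▸ hin)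
  generalize hS : ∑ m' ∈ Finset.Icc 1 (m - 1), compSize n p m' = S at hm hmi
  obtain ⟨r, -, -, hr, hri⟩ :=
    exists_sum_Icc_lt_le (p m) (x := i - S) (by omega) (N := n) (by unfold compSize at hmi; omega)
  refine ⟨(r, i - S - ∑ r' ∈ Finset.Icc 1 (r - 1), p m r', m),
    inDiag_mk.2 ⟨by omega, by omega⟩, ?_⟩
  simp only [rowTab, hS]
  omega

end Multipartition

section Tableau

variable {l n : ℕ} {p : ℕ → ℕ → ℕ} {t : Node → ℕ}

lemma RowStrict.le_of_le (ht : RowStrict p t) {r c c' m : ℕ} (hc : 1 ≤ c) (hcc' : c ≤ c')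
    (h : InDiag p (r, c', m)) : t (r, c, m) ≤ t (r, c', m) := by
  induction c', hcc' using Nat.le_induction with
  | base => exact le_rfl
  | succ c' hc' ih =>
    have hmid : InDiag p (r, c', m) :=
      inDiag_mk.2 ⟨hc.trans hc', (Nat.le_succ c').trans (inDiag_mk.1 h).2⟩
    exact (ih hmid).trans (ht r c' m hmid h).le

lemma ColStrict.le_of_le (hp : IsMP l n p) (ht : ColStrict p t) {r r' c m : ℕ} (hr : 1 ≤ r)
    (hrr' : r ≤ r') (h : InDiag p (r', c, m)) : t (r, c, m) ≤ t (r', c, m) := by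
  induction r', hrr' using Nat.le_induction with
  | base => exact le_rfl
  | succ r' hr' ih =>
    have hmid : InDiag p (r', c, m) :=
      inDiag_mk.2 ⟨h.1, h.2.trans (hp.part_antitone (hr.trans hr') (Nat.le_succ r'))⟩
    exact (ih hmid).trans (ht r' c m hmid h).le

lemma IsStd.le_of_le (hp : IsMP l n p) (ht : IsStd p t) {r r' c c' m : ℕ} (hr : 1 ≤ r)
    (hrr' : r ≤ r') (hc : 1 ≤ c) (hcc' : c ≤ c') (h : InDiag p (r', c', m)) :
    t (r, c, m) ≤ t (r', c', m) :=
  have hmid : InDiag p (r, c', m) :=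
    inDiag_mk.2 ⟨hc.trans hcc', h.2.trans (hp.part_antitone hr hrr')⟩
  (ht.1.le_of_le hc hcc' hmid).trans (ht.2.le_of_le hp hr hrr' h)

end Tableau

section Counting

variable {n K i : ℕ} {p : ℕ → ℕ → ℕ} {base t : Node → ℕ} {w : Equiv.Perm ℕ}

lemma card_le_bruhatRank (ht : IsTab n p t) (hw : IsPermOfTab n p base t w)
    {S : Finset Node} (hS : ∀ X ∈ S, InDiag p X ∧ base X ≤ K ∧ t X ≤ i) :
    S.card ≤ bruhatRank w K i := by
  refine Finset.card_le_card_of_injOn base (fun X hX => ?_) (fun X hX Y hY hXY => ?_)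
  · obtain ⟨hXp, hXK, hXi⟩ := hS X hX
    have hpos : base X ≠ 0 := fun h0 => by
      have := (ht.1 X hXp).1
      rw [← hw.2 X hXp, h0, hw.1 0 (Or.inl rfl)] at this
      omega
    simp only [Finset.coe_filter, Finset.mem_Icc, Set.mem_ofPred_eq, hw.2 X hXp]
    omega
  · have hX := (hS X hX).1
    have hY := (hS Y hY).1
    exact ht.2.1 X Y hX hY (by rw [← hw.2 X hX, ← hw.2 Y hY, hXY])

lemma bruhatRank_le_card (ht : IsTab n p t) (hw : IsPermOfTab n p base t w) (hin : i ≤ n)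
    {S : Finset Node} (hS : ∀ X, InDiag p X → base X ≤ K → t X ≤ i → X ∈ S) :
    bruhatRank w K i ≤ S.card := by
  refine Finset.card_le_card_of_surjOn base fun q hq => ?_
  simp only [Finset.coe_filter, Finset.mem_Icc, Set.mem_ofPred_eq] at hq
  have hwq : w q ≠ 0 := fun h0 => by
    have := w.injective (h0.trans (hw.1 0 (Or.inl rfl)).symm)
    omega
  obtain ⟨X, hX, htX⟩ := ht.2.2 (w q) (by omega) (by omega)
  have hXq : base X = q := w.injective (by rw [hw.2 X hX, htX])
  exact ⟨X, hS X hX (by omega) (by omega), hXq⟩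

end Counting

lemma WeaklyAbove.trans {X Y Z : Node} (hXY : WeaklyAbove X Y) (hYZ : WeaklyAbove Y Z) :
    WeaklyAbove X Z := by
  unfold WeaklyAbove at *
  omega

section Dominance

variable {l n j : ℕ} {lam mu : ℕ → ℕ → ℕ} {s t : Node → ℕ} {ws wt : Equiv.Perm ℕ}
  {A B : Node}

lemma RowDomOn.weaklyAbove (hdom : RowDomOn n lam mu s j) (hlam : IsMP l n lam)
    (hs : IsTab n mu s) (hB : InDiag lam B) (hBj : rowTab n lam B ≤ j) {X : Node}
    (hX : InDiag mu X) (hsX : s X ≤ rowTab n lam B) : WeaklyAbove X B := by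
  obtain ⟨hsX1, hsXn⟩ := hs.1 X hX
  obtain ⟨B', hB', hB'X⟩ := hlam.exists_rowTab_eq hsX1 hsXn
  exact (hdom _ X B' hsX1 (by omega) hX rfl hB' hB'X).trans
    (hlam.weaklyAbove_of_rowTab_le hB' hB (hB'X ▸ hsX))

variable (hmu : IsMP l n mu) (hs : IsTab n mu s) (ht : IsTab n mu t)
  (hws : IsPermOfTab n mu (colTab l n mu) s ws) (hwt : IsPermOfTab n mu (colTab l n mu) t wt)
  (hbru : BruhatLE n ws wt) (habove : ∀ X, InDiag mu X → s X ≤ t A → WeaklyAbove X B)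
include hmu hs ht hws hwt hbru habove

/-- Compare rank numbers at the position of `A` in `t_μ`. -/
lemma comp_le_of_bruhatLE (hA : InDiag mu A) : A.2.2 ≤ B.2.2 := by
  by_contra! hBA
  have hlow : ({A} : Finset Node).card ≤ bruhatRank wt (colTab l n mu A) (t A) :=
    card_le_bruhatRank ht hwt (by simp [hA])
  have hup : bruhatRank ws (colTab l n mu A) (t A) ≤ (∅ : Finset Node).card :=
    bruhatRank_le_card hs hws (ht.1 A hA).2 fun X hX hXA hsX => by
      have hleft := hmu.weaklyLeft_of_colTab_le hX hA hXA
      have habove := habove X hX hsX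
      simp only [WeaklyLeft, WeaklyAbove] at hleft habove
      omega
  have := hbru.bruhatRank_le (colTab l n mu A) (t A)
  simp only [Finset.card_singleton, Finset.card_empty] at hlow hup
  omega

/-- Compare rank numbers at the position in `t_μ` of the node just below
row `B.1` in the column of `A`: the first `B.1 + 1` rows of the first `A.2.1` columns of
`t` hold entries at most `t A`, while those of `s` lie in the first `B.1` rows. -/
lemma row_le_of_bruhatLE (htstd : IsStd mu t) (hA : InDiag mu A) (hm : A.2.2 = B.2.2) :
    A.1 ≤ B.1 := by
  obtain ⟨rA, cA, m⟩ := A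
  obtain ⟨rB, cB, mB⟩ := B
  dsimp only at hm ⊢
  subst hm
  by_contra! hBA
  obtain ⟨-, -, -, -, hcA, hcAp⟩ := hmu.bounds_of_inDiag hA
  have hC : InDiag mu (rB + 1, cA, m) :=
    inDiag_mk.2 ⟨hcA, hcAp.trans (hmu.part_antitone (by omega) hBA)⟩
  set K := colTab l n mu (rB + 1, cA, m)
  set i := t (rA, cA, m)
  have hlow : (Finset.Icc 1 (rB + 1) ×ˢ Finset.Icc 1 cA ×ˢ {m}).card ≤ bruhatRank wt K i := by
    refine card_le_bruhatRank ht hwt fun X hX => ?_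
    obtain ⟨r, c, m'⟩ := X
    simp only [Finset.mem_product, Finset.mem_Icc, Finset.mem_singleton] at hX
    obtain ⟨⟨hr1, hr⟩, ⟨hc1, hc⟩, rfl⟩ := hX
    have hX : InDiag mu (r, c, m') :=
      inDiag_mk.2 ⟨hc1, hc.trans (hcAp.trans (hmu.part_antitone hr1 (by omega)))⟩
    exact ⟨hX, hmu.colTab_le_of_le hX hC rfl hc hr, htstd.le_of_le hmu hr1 (by omega) hc1 hc hA⟩
  have hup : bruhatRank ws K i ≤ (Finset.Icc 1 rB ×ˢ Finset.Icc 1 cA ×ˢ {m}).card := by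
    refine bruhatRank_le_card hs hws (ht.1 _ hA).2 fun X hX hXK hsX => ?_
    have hleft := hmu.weaklyLeft_of_colTab_le hX hC hXK
    have habove := habove X hX hsX
    obtain ⟨r, c, m'⟩ := X
    obtain ⟨hr1, -, -, -, hc1, -⟩ := hmu.bounds_of_inDiag hX
    simp only [WeaklyLeft, WeaklyAbove] at hleft habove
    simp only [Finset.mem_product, Finset.mem_Icc, Finset.mem_singleton]
    omega
  have := hbru.bruhatRank_le K i
  simp only [Finset.card_product, Nat.card_Icc, Finset.card_singleton, Nat.add_sub_cancel,
    mul_one, add_mul, one_mul] at hlow hup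
  omega

end Dominance

theorem rowDom_of_bruhat_ge_general (l n : ℕ)
    (lam mu : ℕ → ℕ → ℕ) (hlam : IsMP l n lam) (hmu : IsMP l n mu)
    (j : ℕ)
    (s t : Node → ℕ) (hs : IsTab n mu s) (ht : IsTab n mu t)
    (htstd : IsStd mu t)
    (ws wt : Equiv.Perm ℕ)
    (hws : IsPermOfTab n mu (colTab l n mu) s ws)
    (hwt : IsPermOfTab n mu (colTab l n mu) t wt)
    (hdom : RowDomOn n lam mu s j)
    (hbru : BruhatLE n ws wt) :
    RowDomOn n lam mu t j := by
  rintro _ A B - hj hA rfl hB hBA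
  have habove : ∀ X, InDiag mu X → s X ≤ t A → WeaklyAbove X B := fun X hX hsX =>
    hdom.weaklyAbove hlam hs hB (hBA ▸ hj) hX (hBA ▸ hsX)
  rcases (comp_le_of_bruhatLE hmu hs ht hws hwt hbru habove hA).lt_or_eq with hlt | heq
  · exact Or.inl hlt
  · exact Or.inr ⟨heq, row_le_of_bruhatLE hmu hs ht hws hwt hbru habove htstd hA heq⟩

/-- If a standard `μ`-tableau `s` is `λ`-row-dominated on `1,…,j`
and `s ⊴ t` (i.e. `w_s ≤ w_t` in the Bruhat order), then `t` is `λ`-row-dominated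
on `1,…,j`. -/
theorem rowDom_of_bruhat_ge (l n : ℕ) (hl : 1 ≤ l) (hn : 1 ≤ n)
    (lam mu : ℕ → ℕ → ℕ) (hlam : IsMP l n lam) (hmu : IsMP l n mu)
    (j : ℕ) (hj : j ≤ n)
    (s t : Node → ℕ) (hs : IsTab n mu s) (ht : IsTab n mu t)
    (hsstd : IsStd mu s) (htstd : IsStd mu t)
    (ws wt : Equiv.Perm ℕ)
    (hws : IsPermOfTab n mu (colTab l n mu) s ws)
    (hwt : IsPermOfTab n mu (colTab l n mu) t wt)
    (hdom : RowDomOn n lam mu s j)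
    (hbru : BruhatLE n ws wt) :
    RowDomOn n lam mu t j :=
  rowDom_of_bruhat_ge_general l n lam mu hlam hmu j s t hs ht htstd ws wt hws hwt hdom hbru

end FS
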